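/- Let A be a maximal monotone operator on a real Hilbert space H and C a closed linear subspace. Suppose (x_n, u_n) is a sequence in the graph of A with (x_n, u_n) ⇀ (x, u) weakly, x_n − P_C x_n → 0 strongly, and P_C u_n → 0 strongly. Then x ∈ C, u ∈ C^⊥, u ∈ A x, and ⟨x_n, u_n⟩ → ⟨x, u⟩ = 0. -/

import Mathlib

open scoped RealInnerProductSpace
open Filter Topology

def MonotoneOp {H : Type*} [NormedAddCommGroup H] [InnerProductSpace ℝ H]
    (A : H → Set H) : Prop :=
  ∀ x y u v : H, u ∈ A x → v ∈ A y → 0 ≤ ⟪u - v, x - y⟫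

def MaximalMonotone {H : Type*} [NormedAddCommGroup H] [InnerProductSpace ℝ H]
    (A : H → Set H) : Prop :=
  MonotoneOp A ∧ ∀ x u : H, (∀ y v : H, v ∈ A y → 0 ≤ ⟪u - v, x - y⟫) → u ∈ A x

/-!
The weak limits `x ∈ C` and `u ∈ Cᗮ` are read off by testing against `Cᗮ` and `C`. Splitting
`⟪xₙ, uₙ⟫ = ⟪xₙ, P_C uₙ⟫ + ⟪uₙ, P_{Cᗮ} xₙ⟫`, each term is a bounded sequence (weakly convergent
sequences are bounded by Banach–Steinhaus) paired with a null one, so `⟪xₙ, uₙ⟫ → 0 = ⟪x, u⟫`.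
Convergence of the pairings lets the monotonicity inequalities `0 ≤ ⟪uₙ - v, xₙ - y⟫` pass to the
limit, and maximality gives `u ∈ A x`.
-/

section

variable {H : Type*} [NormedAddCommGroup H] [InnerProductSpace ℝ H]

theorem exists_norm_le_of_tendsto_inner [CompleteSpace H] {x : ℕ → H} {xl : H}
    (hxw : ∀ y : H, Tendsto (fun n => ⟪x n, y⟫) atTop (𝓝 ⟪xl, y⟫)) :
    ∃ M : ℝ, ∀ n, ‖x n‖ ≤ M := by
  have hpointwise : ∀ y : H, ∃ My : ℝ, ∀ n, ‖innerSL ℝ (x n) y‖ ≤ My := fun y => by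
    obtain ⟨My, hMy⟩ := (Metric.isBounded_range_of_tendsto _ (hxw y).norm).bddAbove
    exact ⟨My, fun n => hMy ⟨n, rfl⟩⟩
  obtain ⟨M, hM⟩ := banach_steinhaus hpointwise
  exact ⟨M, fun n => by simpa [innerSL_apply_norm] using hM n⟩

theorem tendsto_inner_zero_of_norm_le {ι : Type*} {l : Filter ι} {x y : ι → H} {M : ℝ}
    (hx : ∀ i, ‖x i‖ ≤ M) (hy : Tendsto y l (𝓝 0)) :
    Tendsto (fun i => ⟪x i, y i⟫) l (𝓝 0) :=
  squeeze_zero_norm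
    (fun i => (norm_inner_le_norm _ _).trans (mul_le_mul_of_nonneg_right (hx i) (norm_nonneg _)))
    (by simpa using hy.norm.const_mul M)

namespace Submodule

variable (K : Submodule ℝ H) [K.HasOrthogonalProjection]

theorem inner_eq_inner_starProjection_add_inner_starProjection_orthogonal (x u : H) :
    ⟪x, u⟫ = ⟪x, K.starProjection u⟫ + ⟪u, Kᗮ.starProjection x⟫ := by
  conv_lhs => rw [← K.starProjection_add_starProjection_orthogonal x]
  rw [inner_add_left, inner_starProjection_left_eq_right, real_inner_comm u]

theorem mem_orthogonal_of_tendsto_inner_of_tendsto_starProjection {ι : Type*} {l : Filter ι}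
    [l.NeBot] {x : ι → H} {xl : H} (hxw : ∀ y : H, Tendsto (fun i => ⟪x i, y⟫) l (𝓝 ⟪xl, y⟫))
    (hx : Tendsto (fun i => K.starProjection (x i)) l (𝓝 0)) : xl ∈ Kᗮ := by
  refine (K.mem_orthogonal' xl).2 fun y hy => tendsto_nhds_unique (hxw y) ?_
  have hproj : ∀ i, ⟪K.starProjection (x i), y⟫ = ⟪x i, y⟫ := fun i => by
    rw [inner_starProjection_left_eq_right, K.starProjection_eq_self_iff.2 hy]
  simpa [hproj] using hx.inner (𝕜 := ℝ) (tendsto_const_nhds (x := y))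

theorem tendsto_inner_zero_of_tendsto_starProjection {ι : Type*} {l : Filter ι} {x u : ι → H}
    {Mx Mu : ℝ} (hx : ∀ i, ‖x i‖ ≤ Mx) (hu : ∀ i, ‖u i‖ ≤ Mu)
    (hxs : Tendsto (fun i => Kᗮ.starProjection (x i)) l (𝓝 0))
    (hus : Tendsto (fun i => K.starProjection (u i)) l (𝓝 0)) :
    Tendsto (fun i => ⟪x i, u i⟫) l (𝓝 0) := by
  have h := (tendsto_inner_zero_of_norm_le hx hus).add (tendsto_inner_zero_of_norm_le hu hxs)
  rw [add_zero] at h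
  exact h.congr fun i =>
    (K.inner_eq_inner_starProjection_add_inner_starProjection_orthogonal (x i) (u i)).symm

end Submodule

theorem real_inner_sub_sub (x y u v : H) :
    ⟪u - v, x - y⟫ = ⟪x, u⟫ - ⟪u, y⟫ - ⟪x, v⟫ + ⟪v, y⟫ := by
  simp only [inner_sub_left, inner_sub_right, real_inner_comm x]
  ring

theorem MaximalMonotone.mem_of_tendsto_inner {ι : Type*} {l : Filter ι} [l.NeBot]
    {A : H → Set H} (hA : MaximalMonotone A) {x u : ι → H} {xl ul : H}
    (hgra : ∀ i, u i ∈ A (x i))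
    (hxw : ∀ y : H, Tendsto (fun i => ⟪x i, y⟫) l (𝓝 ⟪xl, y⟫))
    (huw : ∀ y : H, Tendsto (fun i => ⟪u i, y⟫) l (𝓝 ⟪ul, y⟫))
    (hxu : Tendsto (fun i => ⟪x i, u i⟫) l (𝓝 ⟪xl, ul⟫)) : ul ∈ A xl := by
  refine hA.2 xl ul fun y v hv => ?_
  have hlim : Tendsto (fun i => ⟪u i - v, x i - y⟫) l (𝓝 ⟪ul - v, xl - y⟫) := by
    simp_rw [real_inner_sub_sub]
    exact ((hxu.sub (huw y)).sub (hxw v)).add tendsto_const_nhds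
  exact ge_of_tendsto' hlim fun i => hA.1 _ _ _ _ (hgra i) hv

end

/-- If `(x_n, u_n) ∈ gra A`, `(x_n, u_n) ⇀ (x, u)`, `x_n − P_C x_n → 0` and `P_C u_n → 0`,
then `x ∈ C`, `u ∈ C^⊥`, `u ∈ A x` and `⟪x_n, u_n⟫ → ⟪x, u⟫ = 0`. -/
theorem stmt8 {H : Type*} [NormedAddCommGroup H] [InnerProductSpace ℝ H] [CompleteSpace H]
    (A : H → Set H) (hA : MaximalMonotone A)
    (C : Submodule ℝ H) [CompleteSpace C]
    (x u : ℕ → H) (xl ul : H)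
    (hgra : ∀ n, u n ∈ A (x n))
    (hxw : ∀ y : H, Tendsto (fun n => ⟪x n, y⟫) atTop (𝓝 ⟪xl, y⟫))
    (huw : ∀ y : H, Tendsto (fun n => ⟪u n, y⟫) atTop (𝓝 ⟪ul, y⟫))
    (hxs : Tendsto (fun n => x n - (C.orthogonalProjection (x n) : H)) atTop (𝓝 0))
    (hus : Tendsto (fun n => (C.orthogonalProjection (u n) : H)) atTop (𝓝 0)) :
    xl ∈ C ∧ ul ∈ Cᗮ ∧ ul ∈ A xl ∧
      Tendsto (fun n => ⟪x n, u n⟫) atTop (𝓝 ⟪xl, ul⟫) ∧ ⟪xl, ul⟫ = 0 := by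
  have hxs' : Tendsto (fun n => Cᗮ.starProjection (x n)) atTop (𝓝 0) := by simpa using hxs
  have hus' : Tendsto (fun n => C.starProjection (u n)) atTop (𝓝 0) := hus
  have hxl : xl ∈ C := by
    simpa using Cᗮ.mem_orthogonal_of_tendsto_inner_of_tendsto_starProjection hxw hxs'
  have hul : ul ∈ Cᗮ := C.mem_orthogonal_of_tendsto_inner_of_tendsto_starProjection huw hus'
  have hperp : ⟪xl, ul⟫ = 0 := Submodule.inner_right_of_mem_orthogonal hxl hul
  obtain ⟨Mx, hMx⟩ := exists_norm_le_of_tendsto_inner hxw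
  obtain ⟨Mu, hMu⟩ := exists_norm_le_of_tendsto_inner huw
  have hxu : Tendsto (fun n => ⟪x n, u n⟫) atTop (𝓝 ⟪xl, ul⟫) :=
    hperp ▸ C.tendsto_inner_zero_of_tendsto_starProjection hMx hMu hxs' hus'
  exact ⟨hxl, hul, hA.mem_of_tendsto_inner hgra hxw huw hxu, hxu, hperp⟩
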